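/- Let Σ be a set of prime numbers, let (Q_q)_{q∈Σ} be a family of LCA groups such that each Q_q is a topological vector space over ℚ_q, and let Z_q be a compact open subgroup of Q_q for each q ∈ Σ. Then there exists a family (n_q)_{q∈Σ} of nonnegative integers such that the restricted product ∏'_{q∈Σ}(Q_q, Z_q) is isomorphic as a topological group to the restricted product ∏'_{q∈Σ}(ℚ_q^{n_q}, ℤ_q^{n_q}). In particular, up to isomorphism the restricted product does not depend on the choice of the compact open subgroups Z_q. -/

import Mathlib

/-!
By Riesz's theorem each `Q_q` is finite-dimensional over `ℚ_q`. A compact open subgroup `Z_q` is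
closed, hence stable under `ℤ_q`, the closure of `ℤ`. Being compact it is absorbed by the open
`ℤ_q`-span of a basis, so it is finitely generated over the noetherian ring `ℤ_q`; being open it
spans `Q_q`. Thus `Z_q` is a `ℤ_q`-lattice, and a `ℤ_q`-basis of it is a `ℚ_q`-basis in whose
coordinates `Z_q` becomes `ℤ_q^{n_q}`. These coordinate isomorphisms assemble into a topological
isomorphism of restricted products.
-/

open Filter Set

instance (p : Nat.Primes) : Fact (p : ℕ).Prime := ⟨p.2⟩

/-- The additive subgroup `ℤ_p` of `ℚ_p`. -/
def padicIntAddSubgroup (p : Nat.Primes) : AddSubgroup ℚ_[(p : ℕ)] where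
  carrier := {x | ‖x‖ ≤ 1}
  zero_mem' := by
    show ‖(0 : ℚ_[(p : ℕ)])‖ ≤ 1
    simp
  add_mem' := by
    intro a b ha hb
    show ‖a + b‖ ≤ 1
    exact le_trans (Padic.nonarchimedean _ _) (max_le ha hb)
  neg_mem' := by
    intro a ha
    show ‖-a‖ ≤ 1
    simpa using ha

/-- The restricted product `∏'_i (G i, H i)` of abelian topological groups with respect to
subgroups `H i`, as a subgroup of the full product: the set of elements whose `i`-th coordinate
lies in `H i` for all but finitely many `i`. -/
def restrictedSubgroup {ι : Type*} (G : ι → Type*) [∀ i, AddCommGroup (G i)]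
    (H : (i : ι) → AddSubgroup (G i)) : AddSubgroup ((i : ι) → G i) where
  carrier := {x | ∀ᶠ i in cofinite, x i ∈ H i}
  zero_mem' := by
    show ∀ᶠ i in cofinite, (0 : (i : ι) → G i) i ∈ H i
    exact Eventually.of_forall fun i => (H i).zero_mem
  add_mem' := by
    intro a b ha hb
    have ha' : ∀ᶠ i in cofinite, a i ∈ H i := ha
    have hb' : ∀ᶠ i in cofinite, b i ∈ H i := hb
    exact (ha'.and hb').mono fun i h => (H i).add_mem h.1 h.2
  neg_mem' := by
    intro a ha
    have ha' : ∀ᶠ i in cofinite, a i ∈ H i := ha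
    exact ha'.mono fun i h => (H i).neg_mem h

/-- The restricted product, as a type. -/
def RestrictedProductAdd {ι : Type*} (G : ι → Type*) [∀ i, AddCommGroup (G i)]
    (H : (i : ι) → AddSubgroup (G i)) := ↥(restrictedSubgroup G H)

instance {ι : Type*} (G : ι → Type*) [∀ i, AddCommGroup (G i)]
    (H : (i : ι) → AddSubgroup (G i)) : AddCommGroup (RestrictedProductAdd G H) :=
  inferInstanceAs (AddCommGroup ↥(restrictedSubgroup G H))

/-- The underlying element of the full product. -/
def RestrictedProductAdd.val {ι : Type*} (G : ι → Type*) [∀ i, AddCommGroup (G i)]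
    (H : (i : ι) → AddSubgroup (G i)) : RestrictedProductAdd G H → ((i : ι) → G i) :=
  Subtype.val

/-- The restricted product topology: generated by the open boxes `∏ U_i` with every `U_i` open
and `U_i = H i` for all but finitely many `i`. -/
instance {ι : Type*} (G : ι → Type*) [∀ i, AddCommGroup (G i)] [∀ i, TopologicalSpace (G i)]
    (H : (i : ι) → AddSubgroup (G i)) : TopologicalSpace (RestrictedProductAdd G H) :=
  TopologicalSpace.generateFrom
    {s | ∃ U : (i : ι) → Set (G i), (∀ i, IsOpen (U i)) ∧
      (∀ᶠ i in cofinite, U i = (H i : Set (G i))) ∧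
      s = RestrictedProductAdd.val G H ⁻¹' Set.pi univ U}

/-- The restricted product `∏'_{q∈Σ} (ℚ_q^{n_q}, ℤ_q^{n_q})`. -/
abbrev PadicRestrictedProduct (P : Set Nat.Primes) (n : ↥P → ℕ) :=
  RestrictedProductAdd (fun q : ↥P => Fin (n q) → ℚ_[(q.1 : ℕ)])
    (fun q => AddSubgroup.pi Set.univ fun _ => padicIntAddSubgroup q.1)

namespace Module.Basis

variable {R K V : Type*} [CommRing R] [Field K] [Algebra R K]
  [AddCommGroup V] [Module K V] [Module R V] [IsScalarTower R K V]

theorem isLattice_span {ι : Type*} [Finite ι] (w : Basis ι K V) :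
    (Submodule.span R (Set.range w)).IsLattice K where
  fg := Submodule.fg_span (Set.finite_range w)
  span_eq_top := by rw [Submodule.span_span_of_tower, w.span_eq]

theorem mem_iff_extendOfIsLattice_repr_mem [IsDomain R] [IsFractionRing R K] {κ : Type*}
    {M : Submodule R V} [M.IsLattice K] (b : Basis κ R M) (x : V) :
    x ∈ M ↔ ∀ i, (b.extendOfIsLattice K).repr x i ∈ Set.range (algebraMap R K) := by
  have hM : Submodule.span R (Set.range (b.extendOfIsLattice K)) = M := by
    have : Set.range (b.extendOfIsLattice K) = M.subtype '' Set.range b := by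
      rw [← Set.range_comp]; ext; simp
    rw [this, ← Submodule.map_span, b.span_eq, Submodule.map_top, Submodule.range_subtype]
  rw [← (b.extendOfIsLattice K).mem_span_iff_repr_mem R, hM]

end Module.Basis

theorem PadicInt.mem_range_algebraMap_iff {p : ℕ} [Fact p.Prime] {x : ℚ_[p]} :
    x ∈ Set.range (algebraMap ℤ_[p] ℚ_[p]) ↔ ‖x‖ ≤ 1 :=
  ⟨fun ⟨c, hc⟩ => hc ▸ c.2, fun hx => ⟨⟨x, hx⟩, rfl⟩⟩

section Padic

variable {p : ℕ} [Fact p.Prime] {V : Type*} [AddCommGroup V] [TopologicalSpace V]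
  [Module ℚ_[p] V] [ContinuousSMul ℚ_[p] V] [Module ℤ_[p] V] [IsScalarTower ℤ_[p] ℚ_[p] V]

theorem AddSubgroup.padicInt_smul_mem {Z : AddSubgroup V} (hZ : IsClosed (Z : Set V))
    (a : ℤ_[p]) {x : V} (hx : x ∈ Z) : a • x ∈ Z := by
  have hclosed : IsClosed {c : ℤ_[p] | c • x ∈ Z} := by
    have : {c : ℤ_[p] | c • x ∈ Z} = (fun c : ℤ_[p] => (c : ℚ_[p]) • x) ⁻¹' Z := by
      ext c; simp [← PadicInt.algebraMap_apply, algebraMap_smul]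
    exact this ▸ hZ.preimage (continuous_subtype_val.smul continuous_const)
  refine PadicInt.denseRange_intCast.induction_on a hclosed fun n => ?_
  rw [Int.cast_smul_eq_zsmul]
  exact Z.zsmul_mem hx n

def AddSubgroup.toPadicIntSubmodule (Z : AddSubgroup V) (hZ : IsClosed (Z : Set V)) :
    Submodule ℤ_[p] V :=
  { Z with smul_mem' := fun a _ hx => Z.padicInt_smul_mem hZ a hx }

end Padic

section Lattice

variable {p : ℕ} [Fact p.Prime] {V : Type*} [AddCommGroup V] [TopologicalSpace V]
  [IsTopologicalAddGroup V] [T2Space V] [Module ℚ_[p] V] [ContinuousSMul ℚ_[p] V]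
  [FiniteDimensional ℚ_[p] V] [Module ℤ_[p] V] [IsScalarTower ℤ_[p] ℚ_[p] V]

theorem Module.Basis.isOpen_span_padicInt {ι : Type*} [Finite ι] (w : Module.Basis ι ℚ_[p] V) :
    IsOpen (Submodule.span ℤ_[p] (Set.range w) : Set V) := by
  have : (Submodule.span ℤ_[p] (Set.range w) : Set V) =
      ⋂ i, w.coord i ⁻¹' Metric.closedBall 0 1 := by
    ext x
    simp only [w.mem_span_iff_repr_mem ℤ_[p], PadicInt.mem_range_algebraMap_iff, SetLike.mem_coe,
      Set.mem_iInter, Set.mem_preimage, Module.Basis.coord_apply, mem_closedBall_zero_iff]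
  rw [this]
  exact isOpen_iInter_of_finite fun i =>
    (IsUltrametricDist.isOpen_closedBall _ one_ne_zero).preimage
      (w.coord i).continuous_of_finiteDimensional

open scoped Pointwise in
theorem Submodule.isLattice_of_isCompact_of_isOpen (M : Submodule ℤ_[p] V)
    (hc : IsCompact (M : Set V)) (ho : IsOpen (M : Set V)) : M.IsLattice ℚ_[p] := by
  let w := Module.finBasis ℚ_[p] V
  let Λ := Submodule.span ℤ_[p] (Set.range w)
  have : Λ.IsLattice ℚ_[p] := w.isLattice_span
  obtain ⟨a, hMa, ha⟩ := ((hc.isVonNBounded ℚ_[p]) (w.isOpen_span_padicInt.mem_nhds Λ.zero_mem)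
    |>.and (Bornology.eventually_ne_cobounded 0)).exists
  have hMΛ : M ≤ Units.mk0 a ha • Λ := fun x hx => by
    obtain ⟨y, hy, rfl⟩ := hMa hx
    exact Submodule.smul_mem_pointwise_smul y (Units.mk0 a ha) Λ hy
  refine ⟨(IsLattice.fg (A := ℚ_[p])).of_le hMΛ, ?_⟩
  exact ((absorbent_nhds_zero (ho.mem_nhds M.zero_mem)).mono
    (Submodule.subset_span (R := ℚ_[p]))).submodule_eq_top

end Lattice

theorem AddSubgroup.exists_continuousAddEquiv_pi_padic {p : ℕ} [Fact p.Prime] {V : Type*}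
    [AddCommGroup V] [TopologicalSpace V] [IsTopologicalAddGroup V] [LocallyCompactSpace V]
    [T2Space V] [Module ℚ_[p] V] [ContinuousSMul ℚ_[p] V] (Z : AddSubgroup V)
    (hc : IsCompact (Z : Set V)) (ho : IsOpen (Z : Set V)) :
    ∃ n, ∃ e : V ≃ₜ+ (Fin n → ℚ_[p]), ∀ x, (∀ i, ‖e x i‖ ≤ 1) ↔ x ∈ Z := by
  have : FiniteDimensional ℚ_[p] V := .of_locallyCompactSpace ℚ_[p]
  let _ : Module ℤ_[p] V := Module.compHom V (algebraMap ℤ_[p] ℚ_[p])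
  have : IsScalarTower ℤ_[p] ℚ_[p] V := IsScalarTower.of_compHom ℤ_[p] ℚ_[p] V
  let M := Z.toPadicIntSubmodule (p := p) hc.isClosed
  have : M.IsLattice ℚ_[p] := M.isLattice_of_isCompact_of_isOpen hc ho
  let b := Module.finBasis ℤ_[p] M
  refine ⟨_, (b.extendOfIsLattice ℚ_[p]).equivFun.toContinuousLinearEquiv.toContinuousAddEquiv,
    fun x => ?_⟩
  change _ ↔ x ∈ M
  simp only [b.mem_iff_extendOfIsLattice_repr_mem x, PadicInt.mem_range_algebraMap_iff]
  rfl

namespace RestrictedProductAdd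

variable {ι : Type*} {G G' : ι → Type*} [∀ i, AddCommGroup (G i)] [∀ i, AddCommGroup (G' i)]
  {H : (i : ι) → AddSubgroup (G i)} {H' : (i : ι) → AddSubgroup (G' i)}

theorem eventually_mem (x : RestrictedProductAdd G H) : ∀ᶠ i in cofinite, val G H x i ∈ H i :=
  x.2

variable [∀ i, TopologicalSpace (G i)] [∀ i, TopologicalSpace (G' i)]

theorem continuous_of_val_apply {F : RestrictedProductAdd G H → RestrictedProductAdd G' H'}
    (f : ∀ i, G i → G' i) (hF : ∀ x i, val G' H' (F x) i = f i (val G H x i))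
    (hf : ∀ i, Continuous (f i)) (hfH : ∀ i, f i ⁻¹' H' i = H i) : Continuous F := by
  rw [continuous_generateFrom_iff]
  rintro _ ⟨U, hUo, hUH, rfl⟩
  refine TopologicalSpace.isOpen_generateFrom_of_mem ⟨fun i => f i ⁻¹' U i,
    fun i => (hUo i).preimage (hf i), hUH.mono fun i hi => by simp only [hi, hfH], ?_⟩
  ext x
  simp [hF]

def congr (φ : ∀ i, G i ≃ₜ+ G' i) (hφ : ∀ i x, φ i x ∈ H' i ↔ x ∈ H i) :
    RestrictedProductAdd G H ≃ₜ+ RestrictedProductAdd G' H' where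
  toFun x := ⟨fun i => φ i (x.1 i), (eventually_mem x).mono fun i => (hφ i _).2⟩
  invFun y := ⟨fun i => (φ i).symm (y.1 i),
    (eventually_mem y).mono fun i h => (hφ i _).1 (by rwa [ContinuousAddEquiv.apply_symm_apply])⟩
  left_inv x := Subtype.ext <| funext fun i => (φ i).symm_apply_apply _
  right_inv y := Subtype.ext <| funext fun i => (φ i).apply_symm_apply _
  map_add' x y := Subtype.ext <| funext fun i => map_add (φ i) _ _
  continuous_toFun := continuous_of_val_apply (fun i => φ i) (fun _ _ => rfl)
    (fun i => (φ i).continuous) (fun i => Set.ext (hφ i))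
  continuous_invFun := continuous_of_val_apply (fun i => (φ i).symm) (fun _ _ => rfl)
    (fun i => (φ i).symm.continuous) fun i => Set.ext fun y => by
      rw [Set.mem_preimage, SetLike.mem_coe, SetLike.mem_coe, ← hφ,
        ContinuousAddEquiv.apply_symm_apply]

end RestrictedProductAdd

/-- If `(Q_q)_{q∈Σ}` is a family of LCA groups, each a topological vector space
over `ℚ_q`, and `Z_q` is a compact open subgroup of `Q_q`, then there are nonnegative integers
`n_q` such that `∏'_{q∈Σ}(Q_q, Z_q)` is isomorphic as a topological group to
`∏'_{q∈Σ}(ℚ_q^{n_q}, ℤ_q^{n_q})`; in particular the restricted product does not depend on the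
choice of the compact open subgroups. -/
theorem stmt_8 (P : Set Nat.Primes) (Q : ↥P → Type*) [∀ q, AddCommGroup (Q q)]
    [∀ q, TopologicalSpace (Q q)] [∀ q, IsTopologicalAddGroup (Q q)]
    [∀ q, LocallyCompactSpace (Q q)] [∀ q, T2Space (Q q)]
    [∀ q : ↥P, Module ℚ_[(q.1 : ℕ)] (Q q)] [∀ q : ↥P, ContinuousSMul ℚ_[(q.1 : ℕ)] (Q q)]
    (Z : (q : ↥P) → AddSubgroup (Q q)) (hZc : ∀ q, IsCompact (Z q : Set (Q q)))
    (hZo : ∀ q, IsOpen (Z q : Set (Q q))) :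
    ∃ n : ↥P → ℕ, ∃ e : RestrictedProductAdd Q Z ≃+ PadicRestrictedProduct P n,
      Continuous ⇑e ∧ Continuous ⇑e.symm := by
  choose n φ hφ using fun q : ↥P =>
    (Z q).exists_continuousAddEquiv_pi_padic (p := q.1) (hZc q) (hZo q)
  let e : RestrictedProductAdd Q Z ≃ₜ+ PadicRestrictedProduct P n :=
    RestrictedProductAdd.congr φ fun q x => by
      simp only [AddSubgroup.mem_pi, Set.mem_univ, true_implies]
      exact hφ q x
  exact ⟨n, e.toAddEquiv, e.continuous, e.symm.continuous⟩
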